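/- arXiv:1507.00883 — 2 statements merged into one kernel-verified Lean document; each statement's English description precedes it below -/
import Mathlib

section
/- Let p₁ < p₂, μ ∈ (0,1], and U : (p₁,p₂] → ℂ satisfy U(p) = (p−p₁)^{μ−1} ũ(p) with ũ continuous on [p₁,p₂], differentiable on (p₁,p₂) with ũ' ∈ L¹. Let ψ ∈ C²(I) on an open interval I ⊇ [p₁,p₂] with ψ' monotone and nonvanishing on [p₁,p₂], and set m = min_{[p₁,p₂]} |ψ'| > 0. Then for all ω > 0, |∫_{p₁}^{p₂} U(p) e^{iωψ(p)} dp| ≤ C ω^{−μ} with C = (1/μ)‖ũ‖_{L^∞(p₁,p₂)} + (4‖ũ‖_{L^∞(p₁,p₂)} + ‖ũ'‖_{L¹(p₁,p₂)}) m^{−1}. -/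
/-!
Split the integral at distance `1 / ω` from the singular endpoint `p₁`. On the short piece the
integrand is at most `M (p - p₁) ^ (μ - 1)` with `M = sup ‖ut‖`, whose integral is
`M ω ^ (-μ) / μ`. On the rest the weight `(p - p₁) ^ (μ - 1)` is monotone and at most
`ω ^ (1 - μ)`, and one integration by parts, writing `exp (i ω ψ) = (exp (i ω ψ))' / (i ω ψ')`,
gives a van der Corput bound of order `ω ^ (1 - μ) / (ω m)`: since `ψ'` is monotone and of
constant sign, `1 / ψ'` is monotone, so its total variation is at most `1 / m`.
-/

open Complex MeasureTheory Set intervalIntegral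

theorem IsPreconnected.forall_pos_or_forall_neg {X α : Type*} [TopologicalSpace X]
    [LinearOrder α] [TopologicalSpace α] [OrderClosedTopology α] [Zero α] {s : Set X}
    {f : X → α} (hs : IsPreconnected s) (hf : ContinuousOn f s) (hf0 : ∀ x ∈ s, f x ≠ 0) :
    (∀ x ∈ s, 0 < f x) ∨ ∀ x ∈ s, f x < 0 := by
  by_contra! ⟨⟨x, hx, hfx⟩, y, hy, hfy⟩
  obtain ⟨z, hz, hfz⟩ := hs.intermediate_value hx hy hf ⟨hfx, hfy⟩
  exact hf0 z hz hfz

theorem IntervalIntegrable.ofReal {𝕜 : Type*} [RCLike 𝕜] {f : ℝ → ℝ} {a b : ℝ}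
    {μ : Measure ℝ} (hf : IntervalIntegrable f μ a b) :
    IntervalIntegrable (fun x => (f x : 𝕜)) μ a b :=
  ⟨hf.1.ofReal, hf.2.ofReal⟩

theorem ContDiffOn.hasDerivAt_deriv_of_isOpen {f : ℝ → ℝ} {s : Set ℝ} {n : WithTop ℕ∞}
    (hf : ContDiffOn ℝ n f s) (hs : IsOpen s) (hn : 1 ≤ n) {x : ℝ} (hx : x ∈ s) :
    HasDerivAt f (deriv f x) x :=
  ((hf.differentiableOn (zero_lt_one.trans_le hn).ne').differentiableAt
    (hs.mem_nhds hx)).hasDerivAt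

section Variation

variable {f f' : ℝ → ℝ} {a b : ℝ}

theorem intervalIntegrable_deriv_and_integral_abs_deriv_eq (hab : a ≤ b)
    (hf : ContinuousOn f (Icc a b)) (hf' : ∀ x ∈ Ioo a b, HasDerivAt f (f' x) x)
    (hmono : MonotoneOn f (Icc a b) ∨ AntitoneOn f (Icc a b)) :
    IntervalIntegrable f' volume a b ∧ ∫ x in a..b, |f' x| = |f b - f a| := by
  wlog hmono' : MonotoneOn f (Icc a b) generalizing f f'
  · have hanti : AntitoneOn f (Icc a b) := hmono.resolve_left hmono'
    obtain ⟨hint, heq⟩ := this (f := fun x => -f x) (f' := fun x => -f' x) hf.neg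
      (fun x hx => (hf' x hx).neg) (Or.inl hanti.neg) hanti.neg
    refine ⟨by simpa only [Pi.neg_def, neg_neg] using hint.neg, ?_⟩
    simpa only [abs_neg, neg_sub_neg, abs_sub_comm (f a)] using heq
  have hnonneg : ∀ x ∈ Ioo a b, 0 ≤ f' x := fun x hx => by
    rw [← (hf' x hx).deriv, ← derivWithin_of_mem_nhds (Icc_mem_nhds hx.1 hx.2)]
    exact hmono'.derivWithin_nonneg
  have hint : IntervalIntegrable f' volume a b :=
    (intervalIntegrable_iff_integrableOn_Ioc_of_le hab).2
      (integrableOn_deriv_of_nonneg hf hf' hnonneg)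
  refine ⟨hint, ?_⟩
  have hfab : f a ≤ f b := hmono' (left_mem_Icc.2 hab) (right_mem_Icc.2 hab) hab
  rw [integral_congr_uIoo (g := f'), integral_eq_sub_of_hasDerivAt_of_le hab hf hf' hint,
    abs_of_nonneg (sub_nonneg.2 hfab)]
  intro x hx
  rw [uIoo_of_le hab] at hx
  exact abs_of_nonneg (hnonneg x hx)

theorem intervalIntegrable_and_integral_abs_deriv_inv_le {m : ℝ} (hab : a ≤ b)
    (hf : ContinuousOn f (Icc a b)) (hf' : ∀ x ∈ Ioo a b, HasDerivAt f (f' x) x)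
    (hmono : MonotoneOn f (Icc a b) ∨ AntitoneOn f (Icc a b))
    (hm : 0 < m) (hfm : ∀ x ∈ Icc a b, m ≤ |f x|) :
    IntervalIntegrable (fun x => -f' x / f x ^ 2) volume a b ∧
      ∫ x in a..b, |-f' x / f x ^ 2| ≤ m⁻¹ := by
  have hf0 : ∀ x ∈ Icc a b, f x ≠ 0 := fun x hx => abs_pos.1 (hm.trans_le (hfm x hx))
  have hle : ∀ x ∈ Icc a b, |(f x)⁻¹| ≤ m⁻¹ := fun x hx => by
    simpa only [abs_inv] using inv_anti₀ hm (hfm x hx)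
  have hsign := isPreconnected_Icc.forall_pos_or_forall_neg hf hf0
  have hinv_mono : MonotoneOn (fun x => (f x)⁻¹) (Icc a b) ∨
      AntitoneOn (fun x => (f x)⁻¹) (Icc a b) := by
    have key : ∀ x ∈ Icc a b, ∀ y ∈ Icc a b, f x ≤ f y → (f y)⁻¹ ≤ (f x)⁻¹ :=
      fun x hx y hy hxy => by
        rcases hsign with hpos | hneg
        · exact inv_anti₀ (hpos x hx) hxy
        · exact (inv_le_inv_of_neg (hneg y hy) (hneg x hx)).2 hxy
    rcases hmono with hmono | hanti
    · exact Or.inr fun x hx y hy hxy => key x hx y hy (hmono hx hy hxy)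
    · exact Or.inl fun x hx y hy hxy => key y hy x hx (hanti hx hy hxy)
  obtain ⟨hint, heq⟩ := intervalIntegrable_deriv_and_integral_abs_deriv_eq hab (hf.inv₀ hf0)
    (fun x hx => (hf' x hx).inv (hf0 x (Ioo_subset_Icc_self hx))) hinv_mono
  refine ⟨hint, heq ▸ ?_⟩
  -- `1 / f` keeps its sign and has modulus at most `1 / m`, so its increment is at most `1 / m`.
  have ha := abs_le.1 (hle a (left_mem_Icc.2 hab))
  have hb := abs_le.1 (hle b (right_mem_Icc.2 hab))
  rcases hsign with hpos | hneg
  · exact abs_sub_le_of_nonneg_of_le (inv_nonneg.2 (hpos b (right_mem_Icc.2 hab)).le) hb.2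
      (inv_nonneg.2 (hpos a (left_mem_Icc.2 hab)).le) ha.2
  · simpa using abs_sub_le_of_le_of_le hb.1 (inv_nonpos.2 (hneg b (right_mem_Icc.2 hab)).le)
      ha.1 (inv_nonpos.2 (hneg a (left_mem_Icc.2 hab)).le)

end Variation

section Parts

variable {A : Type*} [NormedRing A] {u u' v v' : ℝ → A} {a b : ℝ}

theorem intervalIntegrable_and_integral_norm_deriv_mul_le {U V : ℝ} (hab : a ≤ b)
    (hu : ContinuousOn u (Icc a b)) (hv : ContinuousOn v (Icc a b))
    (hu'i : IntervalIntegrable u' volume a b) (hv'i : IntervalIntegrable v' volume a b)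
    (hU : ∀ x ∈ Icc a b, ‖u x‖ ≤ U) (hV : ∀ x ∈ Icc a b, ‖v x‖ ≤ V) :
    IntervalIntegrable (fun x => u' x * v x + u x * v' x) volume a b ∧
      ∫ x in a..b, ‖u' x * v x + u x * v' x‖ ≤
        V * (∫ x in a..b, ‖u' x‖) + U * ∫ x in a..b, ‖v' x‖ := by
  rw [← uIcc_of_le hab] at hu hv
  have hint := (hu'i.mul_continuousOn hv).add (hv'i.continuousOn_mul hu)
  refine ⟨hint, ?_⟩
  have hbound : ∀ x ∈ Icc a b, ‖u' x * v x + u x * v' x‖ ≤ V * ‖u' x‖ + U * ‖v' x‖ :=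
    fun x hx => (norm_add_le _ _).trans <| add_le_add
      ((norm_mul_le _ _).trans (by rw [mul_comm]; gcongr; exact hV x hx))
      ((norm_mul_le _ _).trans (by gcongr; exact hU x hx))
  calc _ ≤ ∫ x in a..b, (V * ‖u' x‖ + U * ‖v' x‖) :=
        integral_mono_on hab hint.norm ((hu'i.norm.const_mul _).add (hv'i.norm.const_mul _))
          hbound
    _ = _ := by
        rw [integral_add (hu'i.norm.const_mul _) (hv'i.norm.const_mul _),
          intervalIntegral.integral_const_mul, intervalIntegral.integral_const_mul]

theorem norm_integral_mul_deriv_le [NormedAlgebra ℝ A] [CompleteSpace A] (hab : a ≤ b)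
    (hu : ContinuousOn u (Icc a b)) (hv : ContinuousOn v (Icc a b))
    (hu' : ∀ x ∈ Ioo a b, HasDerivAt u (u' x) x) (hv' : ∀ x ∈ Ioo a b, HasDerivAt v (v' x) x)
    (hu'i : IntervalIntegrable u' volume a b) (hv'i : IntervalIntegrable v' volume a b)
    (hv1 : ∀ x ∈ Icc a b, ‖v x‖ ≤ 1) :
    ‖∫ x in a..b, u x * v' x‖ ≤ ‖u a‖ + ‖u b‖ + ∫ x in a..b, ‖u' x‖ := by
  rw [← uIcc_of_le hab] at hu hv
  have hle : ∀ w, ∀ x ∈ Icc a b, ‖w * v x‖ ≤ ‖w‖ := fun w x hx =>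
    (norm_mul_le _ _).trans (mul_le_of_le_one_right (norm_nonneg _) (hv1 x hx))
  have hrest : ‖∫ x in a..b, u' x * v x‖ ≤ ∫ x in a..b, ‖u' x‖ :=
    norm_integral_le_of_norm_le hab
      (ae_of_all _ fun x hx => hle _ x (Ioc_subset_Icc_self hx)) hu'i.norm
  rw [integral_mul_deriv_eq_deriv_mul_of_hasDerivAt hu hv
    (by rwa [min_eq_left hab, max_eq_right hab]) (by rwa [min_eq_left hab, max_eq_right hab])
    hu'i hv'i]
  calc _ ≤ ‖u b * v b‖ + ‖u a * v a‖ + ‖∫ x in a..b, u' x * v x‖ :=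
      (norm_sub_le _ _).trans (add_le_add_left (norm_sub_le _ _) _)
    _ ≤ _ := by
      linarith [hle (u a) a (left_mem_Icc.2 hab), hle (u b) b (right_mem_Icc.2 hab)]

end Parts

section SingularWeight

variable {c μ : ℝ}

theorem intervalIntegrable_rpow_sub (hμ : 0 < μ) (s t : ℝ) :
    IntervalIntegrable (fun x => (x - c) ^ (μ - 1)) volume s t := by
  simpa using (intervalIntegral.intervalIntegrable_rpow' (a := s - c) (b := t - c)
    (by linarith : -1 < μ - 1)).comp_sub_right c

theorem integral_rpow_sub (hμ : 0 < μ) (t : ℝ) :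
    ∫ x in c..t, (x - c) ^ (μ - 1) = (t - c) ^ μ / μ := by
  rw [intervalIntegral.integral_comp_sub_right (fun x => x ^ (μ - 1)),
    integral_rpow (Or.inl (by linarith))]
  simp [Real.zero_rpow hμ.ne']

variable {E : Type*} [NormedAddCommGroup E] {f : ℝ → E} {t M : ℝ}

theorem intervalIntegrable_of_norm_le_rpow_sub (hct : c ≤ t) (hμ : 0 < μ)
    (hf : ContinuousOn f (Ioc c t)) (hfM : ∀ x ∈ Ioc c t, ‖f x‖ ≤ M * (x - c) ^ (μ - 1)) :
    IntervalIntegrable f volume c t :=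
  (intervalIntegrable_iff_integrableOn_Ioc_of_le hct).2 <|
    Integrable.mono' ((intervalIntegrable_iff_integrableOn_Ioc_of_le hct).1
      ((intervalIntegrable_rpow_sub hμ c t).const_mul M))
      (hf.aestronglyMeasurable measurableSet_Ioc)
      ((ae_restrict_iff' measurableSet_Ioc).2 (ae_of_all _ hfM))

theorem norm_integral_le_of_norm_le_rpow_sub [NormedSpace ℝ E] (hct : c ≤ t) (hμ : 0 < μ)
    (hfM : ∀ x ∈ Ioc c t, ‖f x‖ ≤ M * (x - c) ^ (μ - 1)) :
    ‖∫ x in c..t, f x‖ ≤ M * (t - c) ^ μ / μ := by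
  calc ‖∫ x in c..t, f x‖ ≤ ∫ x in c..t, M * (x - c) ^ (μ - 1) :=
        norm_integral_le_of_norm_le hct (ae_of_all _ hfM)
          ((intervalIntegrable_rpow_sub hμ c t).const_mul M)
    _ = M * (t - c) ^ μ / μ := by
        rw [intervalIntegral.integral_const_mul, integral_rpow_sub hμ, mul_div_assoc]

end SingularWeight

section Oscillatory

variable {g g' : ℝ → ℂ} {φ φ' φ'' : ℝ → ℝ} {a b m M : ℝ}

theorem norm_integral_mul_exp_I_le_of_eq_mul_deriv {u u' : ℝ → ℂ} (hab : a ≤ b)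
    (hu : ContinuousOn u (Icc a b)) (hu' : ∀ x ∈ Ioo a b, HasDerivAt u (u' x) x)
    (hu'i : IntervalIntegrable u' volume a b)
    (hφ : ContinuousOn φ (Icc a b)) (hφ' : ∀ x ∈ Ioo a b, HasDerivAt φ (φ' x) x)
    (hφ'c : ContinuousOn φ' (Icc a b)) (hgu : ∀ x ∈ Icc a b, g x = u x * (I * φ' x)) :
    ‖∫ x in a..b, g x * exp (I * φ x)‖ ≤ ‖u a‖ + ‖u b‖ + ∫ x in a..b, ‖u' x‖ := by
  have hg : ∫ x in a..b, g x * exp (I * φ x) =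
      ∫ x in a..b, u x * (exp (I * φ x) * (I * φ' x)) := by
    refine integral_congr fun x hx => ?_
    rw [hgu x (by rwa [uIcc_of_le hab] at hx)]
    ring
  rw [hg]
  refine norm_integral_mul_deriv_le hab hu (by fun_prop) hu'
    (fun x hx => ((hφ' x hx).ofReal_comp.const_mul I).cexp) hu'i
    (ContinuousOn.intervalIntegrable_of_Icc hab (by fun_prop)) fun x _ => ?_
  simp [norm_exp_I_mul_ofReal]

theorem norm_integral_mul_exp_I_le {K : ℝ} (hab : a ≤ b)
    (hg : ContinuousOn g (Icc a b)) (hg' : ∀ x ∈ Ioo a b, HasDerivAt g (g' x) x)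
    (hg'i : IntervalIntegrable g' volume a b) (hK : ∀ x ∈ Icc a b, ‖g x‖ ≤ K)
    (hφ : ContinuousOn φ (Icc a b)) (hφ' : ∀ x ∈ Ioo a b, HasDerivAt φ (φ' x) x)
    (hφ'c : ContinuousOn φ' (Icc a b)) (hφ'' : ∀ x ∈ Ioo a b, HasDerivAt φ' (φ'' x) x)
    (hmono : MonotoneOn φ' (Icc a b) ∨ AntitoneOn φ' (Icc a b))
    (hm : 0 < m) (hφm : ∀ x ∈ Icc a b, m ≤ |φ' x|) :
    ‖∫ x in a..b, g x * exp (I * φ x)‖ ≤ (3 * K + ∫ x in a..b, ‖g' x‖) / m := by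
  have hφ'0 : ∀ x ∈ Icc a b, φ' x ≠ 0 := fun x hx => abs_pos.1 (hm.trans_le (hφm x hx))
  obtain ⟨hh'i, hh'_int⟩ :=
    intervalIntegrable_and_integral_abs_deriv_inv_le hab hφ'c hφ'' hmono hm hφm
  -- `c = 1 / (I φ')`, so that `g exp (I φ) = (g c) (exp (I φ))'`
  set c : ℝ → ℂ := fun x => -I * ((φ' x)⁻¹ : ℝ)
  have hc : ContinuousOn c (Icc a b) := by
    have := hφ'c.inv₀ hφ'0; fun_prop
  have hc_le : ∀ x ∈ Icc a b, ‖c x‖ ≤ m⁻¹ := fun x hx => by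
    simpa only [c, norm_mul, norm_neg, norm_I, one_mul, norm_real, Real.norm_eq_abs, abs_inv]
      using inv_anti₀ hm (hφm x hx)
  obtain ⟨hu'i, hu'_int⟩ := intervalIntegrable_and_integral_norm_deriv_mul_le hab hg hc hg'i
    (hh'i.ofReal.const_mul (-I)) hK hc_le
  have hgu : ∀ x ∈ Icc a b, g x = g x * c x * (I * φ' x) := fun x hx => by
    have : (((φ' x)⁻¹ : ℝ) : ℂ) * φ' x = 1 := by
      rw [ofReal_inv]; exact inv_mul_cancel₀ (ofReal_ne_zero.2 (hφ'0 x hx))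
    linear_combination (I ^ 2 * g x) * this + g x * I_sq
  have hc'_int : ∫ x in a..b, ‖-I * ((-φ'' x / φ' x ^ 2 : ℝ) : ℂ)‖ ≤ m⁻¹ := by
    simpa only [norm_mul, norm_neg, norm_I, one_mul, norm_real, Real.norm_eq_abs] using hh'_int
  refine (norm_integral_mul_exp_I_le_of_eq_mul_deriv (u := fun x => g x * c x)
    (u' := fun x => g' x * c x + g x * (-I * ((-φ'' x / φ' x ^ 2 : ℝ) : ℂ))) hab (hg.mul hc)
    (fun x hx => (hg' x hx).mul
      (((hφ'' x hx).inv (hφ'0 x (Ioo_subset_Icc_self hx))).ofReal_comp.const_mul (-I)))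
    hu'i hφ hφ' hφ'c hgu).trans ?_
  have hK0 : 0 ≤ K := (norm_nonneg _).trans (hK a (left_mem_Icc.2 hab))
  have hend : ∀ x ∈ Icc a b, ‖g x * c x‖ ≤ K * m⁻¹ := fun x hx =>
    (norm_mul_le _ _).trans (mul_le_mul (hK x hx) (hc_le x hx) (norm_nonneg _) hK0)
  calc _ ≤ K * m⁻¹ + K * m⁻¹ + (m⁻¹ * (∫ x in a..b, ‖g' x‖) + K * m⁻¹) := by
        gcongr
        · exact hend a (left_mem_Icc.2 hab)
        · exact hend b (right_mem_Icc.2 hab)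
        · exact hu'_int.trans (by gcongr; exact hc'_int)
    _ = (3 * K + ∫ x in a..b, ‖g' x‖) / m := by ring

theorem norm_integral_ofReal_mul_mul_exp_I_le {r r' : ℝ → ℝ} {R : ℝ} (hab : a ≤ b)
    (hr : ContinuousOn r (Icc a b)) (hr' : ∀ x ∈ Ioo a b, HasDerivAt r (r' x) x)
    (hrmono : MonotoneOn r (Icc a b) ∨ AntitoneOn r (Icc a b))
    (hrR : ∀ x ∈ Icc a b, 0 ≤ r x ∧ r x ≤ R)
    (hg : ContinuousOn g (Icc a b)) (hg' : ∀ x ∈ Ioo a b, HasDerivAt g (g' x) x)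
    (hg'i : IntervalIntegrable g' volume a b) (hM : ∀ x ∈ Icc a b, ‖g x‖ ≤ M)
    (hφ : ContinuousOn φ (Icc a b)) (hφ' : ∀ x ∈ Ioo a b, HasDerivAt φ (φ' x) x)
    (hφ'c : ContinuousOn φ' (Icc a b)) (hφ'' : ∀ x ∈ Ioo a b, HasDerivAt φ' (φ'' x) x)
    (hmono : MonotoneOn φ' (Icc a b) ∨ AntitoneOn φ' (Icc a b))
    (hm : 0 < m) (hφm : ∀ x ∈ Icc a b, m ≤ |φ' x|) :
    ‖∫ x in a..b, (r x : ℂ) * g x * exp (I * φ x)‖ ≤ R * (4 * M + ∫ x in a..b, ‖g' x‖) / m := by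
  have ha := left_mem_Icc.2 hab
  have hb := right_mem_Icc.2 hab
  have hR0 : 0 ≤ R := (hrR a ha).1.trans (hrR a ha).2
  have hM0 : 0 ≤ M := (norm_nonneg _).trans (hM a ha)
  have hr_le : ∀ x ∈ Icc a b, ‖(r x : ℂ)‖ ≤ R := fun x hx => by
    rw [norm_real, Real.norm_eq_abs, abs_of_nonneg (hrR x hx).1]
    exact (hrR x hx).2
  obtain ⟨hr'i, hr'_int⟩ := intervalIntegrable_deriv_and_integral_abs_deriv_eq hab hr hr' hrmono
  have hr'_le : ∫ x in a..b, ‖(r' x : ℂ)‖ ≤ R := by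
    simp only [norm_real, Real.norm_eq_abs, hr'_int]
    exact abs_sub_le_of_nonneg_of_le (hrR b hb).1 (hrR b hb).2 (hrR a ha).1 (hrR a ha).2
  obtain ⟨hG'i, hG'_int⟩ := intervalIntegrable_and_integral_norm_deriv_mul_le hab
    (by fun_prop) hg hr'i.ofReal hg'i hr_le hM
  calc _ ≤ (3 * (R * M) + ∫ x in a..b, ‖(r' x : ℂ) * g x + r x * g' x‖) / m :=
        norm_integral_mul_exp_I_le hab (by fun_prop)
          (fun x hx => (hr' x hx).ofReal_comp.mul (hg' x hx)) hG'i
          (fun x hx => (norm_mul_le _ _).trans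
            (mul_le_mul (hr_le x hx) (hM x hx) (norm_nonneg _) hR0))
          hφ hφ' hφ'c hφ'' hmono hm hφm
    _ ≤ (3 * (R * M) + (M * R + R * ∫ x in a..b, ‖g' x‖)) / m := by
        gcongr
        exact hG'_int.trans (by gcongr; exact hr'_le)
    _ = R * (4 * M + ∫ x in a..b, ‖g' x‖) / m := by ring

theorem norm_integral_rpow_sub_mul_mul_exp_I_le_of_lt {c μ : ℝ} (hca : c < a) (hab : a ≤ b)
    (hμ : μ ≤ 1)
    (hg : ContinuousOn g (Icc a b)) (hg' : ∀ x ∈ Ioo a b, HasDerivAt g (g' x) x)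
    (hg'i : IntervalIntegrable g' volume a b) (hM : ∀ x ∈ Icc a b, ‖g x‖ ≤ M)
    (hφ : ContinuousOn φ (Icc a b)) (hφ' : ∀ x ∈ Ioo a b, HasDerivAt φ (φ' x) x)
    (hφ'c : ContinuousOn φ' (Icc a b)) (hφ'' : ∀ x ∈ Ioo a b, HasDerivAt φ' (φ'' x) x)
    (hmono : MonotoneOn φ' (Icc a b) ∨ AntitoneOn φ' (Icc a b))
    (hm : 0 < m) (hφm : ∀ x ∈ Icc a b, m ≤ |φ' x|) :
    ‖∫ x in a..b, (((x - c) ^ (μ - 1) : ℝ) : ℂ) * g x * exp (I * φ x)‖ ≤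
      (a - c) ^ (μ - 1) * (4 * M + ∫ x in a..b, ‖g' x‖) / m := by
  have hpos : ∀ x ∈ Icc a b, 0 < x - c := fun x hx => by linarith [hx.1]
  refine norm_integral_ofReal_mul_mul_exp_I_le (r := fun x => (x - c) ^ (μ - 1)) hab
    (ContinuousOn.rpow_const (by fun_prop) fun x hx => Or.inl (hpos x hx).ne')
    (fun x hx => ((hasDerivAt_id x).sub_const c).rpow_const
      (Or.inl (hpos x (Ioo_subset_Icc_self hx)).ne'))
    (Or.inr fun x hx y hy hxy => Real.rpow_le_rpow_of_nonpos (hpos x hx) (by linarith)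
      (by linarith))
    (fun x hx => ⟨Real.rpow_nonneg (hpos x hx).le _, Real.rpow_le_rpow_of_nonpos (by linarith)
      (by linarith [hx.1]) (by linarith)⟩)
    hg hg' hg'i hM hφ hφ' hφ'c hφ'' hmono hm hφm

theorem norm_integral_rpow_sub_mul_mul_exp_I_le {c μ δ : ℝ} (hcb : c ≤ b)
    (hμ : μ ∈ Ioc (0 : ℝ) 1) (hδ : 0 < δ)
    (hg : ContinuousOn g (Icc c b)) (hg' : ∀ x ∈ Ioo c b, HasDerivAt g (g' x) x)
    (hg'i : IntervalIntegrable g' volume c b) (hM : ∀ x ∈ Icc c b, ‖g x‖ ≤ M)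
    (hφ : ContinuousOn φ (Icc c b)) (hφ' : ∀ x ∈ Ioo c b, HasDerivAt φ (φ' x) x)
    (hφ'c : ContinuousOn φ' (Icc c b)) (hφ'' : ∀ x ∈ Ioo c b, HasDerivAt φ' (φ'' x) x)
    (hmono : MonotoneOn φ' (Icc c b) ∨ AntitoneOn φ' (Icc c b))
    (hm : 0 < m) (hφm : ∀ x ∈ Icc c b, m ≤ |φ' x|) :
    ‖∫ x in c..b, (((x - c) ^ (μ - 1) : ℝ) : ℂ) * g x * exp (I * φ x)‖ ≤
      M * δ ^ μ / μ + δ ^ (μ - 1) * (4 * M + ∫ x in c..b, ‖g' x‖) / m := by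
  set f : ℝ → ℂ := fun x => (((x - c) ^ (μ - 1) : ℝ) : ℂ) * g x * exp (I * φ x)
  have hM0 : 0 ≤ M := (norm_nonneg _).trans (hM c (left_mem_Icc.2 hcb))
  have hfM : ∀ x ∈ Ioc c b, ‖f x‖ ≤ M * (x - c) ^ (μ - 1) := fun x hx => by
    have hr := Real.rpow_nonneg (by linarith [hx.1] : 0 ≤ x - c) (μ - 1)
    simp only [f, norm_mul, norm_real, Real.norm_eq_abs, norm_exp_I_mul_ofReal, mul_one,
      abs_of_nonneg hr, mul_comm M]
    exact mul_le_mul_of_nonneg_left (hM x (Ioc_subset_Icc_self hx)) hr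
  rcases le_or_gt b (c + δ) with hnear | hfar
  · have hδμ := Real.rpow_le_rpow (sub_nonneg.2 hcb) (by linarith : b - c ≤ δ) hμ.1.le
    have hg'0 := integral_nonneg (μ := volume) hcb fun x _ => norm_nonneg (g' x)
    have := hμ.1
    calc ‖∫ x in c..b, f x‖ ≤ M * (b - c) ^ μ / μ :=
          norm_integral_le_of_norm_le_rpow_sub hcb hμ.1 hfM
      _ ≤ _ := le_add_of_le_of_nonneg (by gcongr) (by positivity)
  have hmid : c + δ ∈ uIcc c b := mem_uIcc_of_le (by linarith) hfar.le
  have hsub : Icc (c + δ) b ⊆ Icc c b := Icc_subset_Icc_left (by linarith)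
  have hsub' : Ioo (c + δ) b ⊆ Ioo c b := Ioo_subset_Ioo_left (by linarith)
  have hfi : IntervalIntegrable f volume c b := by
    refine intervalIntegrable_of_norm_le_rpow_sub hcb hμ.1 ?_ hfM
    have := hφ.mono Ioc_subset_Icc_self
    exact ((continuous_ofReal.comp_continuousOn (ContinuousOn.rpow_const (by fun_prop)
      fun x hx => Or.inl (by linarith [hx.1]))).mul (hg.mono Ioc_subset_Icc_self)).mul
      (by fun_prop)
  rw [← integral_add_adjacent_intervals (hfi.mono_set (uIcc_subset_uIcc left_mem_uIcc hmid))
    (hfi.mono_set (uIcc_subset_uIcc hmid right_mem_uIcc))]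
  refine (norm_add_le _ _).trans (add_le_add ?_ ?_)
  · simpa using norm_integral_le_of_norm_le_rpow_sub (t := c + δ) (by linarith) hμ.1
      fun x hx => hfM x (Ioc_subset_Ioc_right hfar.le hx)
  calc _ ≤ (c + δ - c) ^ (μ - 1) * (4 * M + ∫ x in c + δ..b, ‖g' x‖) / m :=
        norm_integral_rpow_sub_mul_mul_exp_I_le_of_lt (by linarith) hfar.le hμ.2 (hg.mono hsub)
          (fun x hx => hg' x (hsub' hx)) (hg'i.mono_set (uIcc_subset_uIcc hmid right_mem_uIcc))
          (fun x hx => hM x (hsub hx)) (hφ.mono hsub) (fun x hx => hφ' x (hsub' hx))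
          (hφ'c.mono hsub) (fun x hx => hφ'' x (hsub' hx))
          (hmono.imp (·.mono hsub) (·.mono hsub)) hm (fun x hx => hφm x (hsub hx))
    _ ≤ δ ^ (μ - 1) * (4 * M + ∫ x in c..b, ‖g' x‖) / m := by
        rw [add_sub_cancel_left]
        gcongr
        exact integral_mono_interval (by linarith) hfar.le le_rfl
          (ae_of_all _ fun x => norm_nonneg _) hg'i.norm

end Oscillatory

theorem vdc_nonstationary_singular
    (p₁ p₂ : ℝ) (hp : p₁ < p₂) (μ : ℝ) (hμ : μ ∈ Set.Ioc (0:ℝ) 1)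
    (I : Set ℝ) (hIopen : IsOpen I) (hIsub : Set.Icc p₁ p₂ ⊆ I)
    (ψ : ℝ → ℝ) (hψ : ContDiffOn ℝ 2 ψ I)
    (hmono : MonotoneOn (deriv ψ) (Set.Icc p₁ p₂) ∨
      AntitoneOn (deriv ψ) (Set.Icc p₁ p₂))
    (m : ℝ) (hm : 0 < m)
    (hmin : IsLeast ((fun p => |deriv ψ p|) '' Set.Icc p₁ p₂) m)
    (ut : ℝ → ℂ)
    (hcont : ContinuousOn ut (Set.Icc p₁ p₂))
    (hdiff : ∀ p ∈ Set.Ioo p₁ p₂, DifferentiableAt ℝ ut p)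
    (hint : IntervalIntegrable (fun p => ‖deriv ut p‖) MeasureTheory.volume p₁ p₂)
    (U : ℝ → ℂ)
    (hU : ∀ p ∈ Set.Ioc p₁ p₂, U p = (((p - p₁) ^ (μ - 1) : ℝ) : ℂ) * ut p) :
    ∀ ω : ℝ, 0 < ω →
      ‖∫ p in p₁..p₂, U p * Complex.exp (Complex.I * ω * ψ p)‖ ≤
        ((1 / μ) * (⨆ p : Set.Icc p₁ p₂, ‖ut (p : ℝ)‖) +
          (4 * (⨆ p : Set.Icc p₁ p₂, ‖ut (p : ℝ)‖) +
            ∫ p in p₁..p₂, ‖deriv ut p‖) * m⁻¹) * ω ^ (-μ) := by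
  intro ω hω
  set M := ⨆ p : Set.Icc p₁ p₂, ‖ut (p : ℝ)‖
  have hM : ∀ p ∈ Icc p₁ p₂, ‖ut p‖ ≤ M := fun p hp =>
    le_ciSup (f := fun p : Icc p₁ p₂ => ‖ut p‖)
      (by simpa only [image_eq_range] using isCompact_Icc.bddAbove_image hcont.norm) ⟨p, hp⟩
  have hIoo : Ioo p₁ p₂ ⊆ I := Ioo_subset_Icc_self.trans hIsub
  have hmonoω : MonotoneOn (fun x => ω * deriv ψ x) (Icc p₁ p₂) ∨
      AntitoneOn (fun x => ω * deriv ψ x) (Icc p₁ p₂) :=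
    hmono.imp (fun h _ hx _ hy hxy => mul_le_mul_of_nonneg_left (h hx hy hxy) hω.le)
      (fun h _ hx _ hy hxy => mul_le_mul_of_nonneg_left (h hx hy hxy) hω.le)
  have hminω : ∀ x ∈ Icc p₁ p₂, ω * m ≤ |ω * deriv ψ x| := fun x hx => by
    rw [abs_mul, abs_of_pos hω]
    exact mul_le_mul_of_nonneg_left (hmin.2 ⟨x, hx, rfl⟩) hω.le
  have hUψ : ∫ p in p₁..p₂, U p * Complex.exp (Complex.I * ω * ψ p) =
      ∫ p in p₁..p₂, (((p - p₁) ^ (μ - 1) : ℝ) : ℂ) * ut p *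
        Complex.exp (Complex.I * ↑(ω * ψ p)) := by
    refine integral_congr_ae (ae_of_all _ fun x hx => ?_)
    rw [uIoc_of_le hp.le] at hx
    rw [hU x hx, ofReal_mul, mul_assoc Complex.I]
  rw [hUψ]
  calc _ ≤ M * ω⁻¹ ^ μ / μ +
        ω⁻¹ ^ (μ - 1) * (4 * M + ∫ p in p₁..p₂, ‖deriv ut p‖) / (ω * m) :=
      norm_integral_rpow_sub_mul_mul_exp_I_le hp.le hμ (inv_pos.2 hω) hcont
        (fun x hx => (hdiff x hx).hasDerivAt)
        (hint.mono_fun' (stronglyMeasurable_deriv ut).aestronglyMeasurable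
          (ae_of_all _ fun _ => le_rfl)) hM
        (continuousOn_const.mul (hψ.continuousOn.mono hIsub))
        (fun x hx => (hψ.hasDerivAt_deriv_of_isOpen hIopen (by norm_num) (hIoo hx)).const_mul ω)
        (continuousOn_const.mul
          ((hψ.continuousOn_deriv_of_isOpen hIopen (by norm_num)).mono hIsub))
        (fun x hx => ((hψ.deriv_of_isOpen hIopen (m := 1) (by norm_num)).hasDerivAt_deriv_of_isOpen
          hIopen le_rfl (hIoo hx)).const_mul ω) hmonoω (mul_pos hω hm) hminω
    _ = _ := by
      rw [Real.rpow_sub_one (inv_ne_zero hω.ne'), Real.inv_rpow hω.le, Real.rpow_neg hω.le]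
      field_simp
end

section
/- In the setting of the previous statement (frequency band [p₁,p₂], singular frequency at p₁ of strength μ−1, f'' > 0, and enlarged interval [p̃₁,p̃₂] ⊋ [p₁,p₂]), there is a constant c^c > 0 such that |u(t,x)| ≤ c^c t^{−μ} for all t > 0 and x with x/t > f'(p̃₂) or x/t < f'(p̃₁). -/
open MeasureTheory
open Set intervalIntegral

lemma core_estimate
    (p₁ p₂ : ℝ) (hp : p₁ < p₂) (μ : ℝ) (hμ0 : 0 < μ) (hμ1 : μ ≤ 1)
    (ut : ℝ → ℂ)
    (hcont : ContinuousOn ut (Set.Icc p₁ p₂))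
    (hdiff : ∀ p ∈ Set.Ioo p₁ p₂, DifferentiableAt ℝ ut p)
    (hint : IntervalIntegrable (fun p => ‖deriv ut p‖) volume p₁ p₂)
    (S V F₂ : ℝ) (hS : ∀ p ∈ Set.Icc p₁ p₂, ‖ut p‖ ≤ S)
    (hV : (∫ p in p₁..p₂, ‖deriv ut p‖) ≤ V) (hV0 : 0 ≤ V)
    (Φ φ φ' : ℝ → ℝ)
    (hΦ : ∀ p, HasDerivAt Φ (φ p) p)
    (hφ : ∀ p, HasDerivAt φ (φ' p) p)
    (hφc : Continuous φ')
    (hF₂ : ∀ p ∈ Set.Icc p₁ p₂, |φ' p| ≤ F₂)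
    (L : ℝ) (hL : 0 < L) (hLφ : ∀ p ∈ Set.Icc p₁ p₂, L ≤ |φ p|)
    (hε : 1/L ≤ (p₂ - p₁)/2) :
    ‖∫ p in p₁..p₂, (((p - p₁) ^ (μ - 1) : ℝ) : ℂ) * ut p
        * Complex.exp (Complex.I * ((Φ p : ℝ) : ℂ))‖ ≤
      (S/μ + (3*S + V + (p₂-p₁)*S*F₂/L)) * (1/L) ^ μ := by
  set ε : ℝ := 1/L with hεdef
  have hε0 : 0 < ε := by positivity
  set a : ℝ := p₁ + ε with hadef
  have ha1 : p₁ < a := by simp [hadef, hε0]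
  have ha2 : a < p₂ := by
    have h2 : ε < p₂ - p₁ := lt_of_le_of_lt hε (by linarith)
    simp only [hadef]; linarith
  have haIcc : Set.Icc a p₂ ⊆ Set.Icc p₁ p₂ := Set.Icc_subset_Icc ha1.le le_rfl
  have hS0 : 0 ≤ S := le_trans (norm_nonneg _) (hS p₁ ⟨le_rfl, hp.le⟩)
  have hF₂0 : 0 ≤ F₂ := le_trans (abs_nonneg _) (hF₂ p₁ ⟨le_rfl, hp.le⟩)
  set g : ℝ → ℂ := fun p => (((p - p₁) ^ (μ - 1) : ℝ) : ℂ) * ut p with hgdef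
  set E : ℝ → ℂ := fun p => Complex.exp (Complex.I * ((Φ p : ℝ) : ℂ)) with hEdef
  have hEnorm : ∀ p, ‖E p‖ = 1 := by
    intro p
    simp only [hEdef, Complex.norm_exp]
    norm_num [Complex.mul_re]
  have hΦcont : Continuous Φ := continuous_iff_continuousAt.mpr fun p => (hΦ p).continuousAt
  have hφcont : Continuous φ := continuous_iff_continuousAt.mpr fun p => (hφ p).continuousAt
  have hEcont : Continuous E := by
    rw [hEdef]; fun_prop
  have hφne : ∀ p ∈ Set.Icc p₁ p₂, φ p ≠ 0 := by
    intro p hp' h0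
    have := hLφ p hp'
    rw [h0, abs_zero] at this
    linarith
  -- integrability of the full integrand
  have hrbase : ∀ b c : ℝ, IntervalIntegrable (fun p : ℝ => (p - p₁) ^ (μ - 1)) volume b c := by
    intro b c
    have h0 : IntervalIntegrable (fun x : ℝ => x ^ (μ - 1)) volume (b - p₁) (c - p₁) :=
      intervalIntegral.intervalIntegrable_rpow' (by linarith)
    have := h0.comp_sub_right p₁
    simpa using this
  have hrC : ∀ b c : ℝ, IntervalIntegrable (fun p : ℝ => (((p - p₁) ^ (μ - 1) : ℝ) : ℂ)) volume b c :=
    fun b c => ⟨(hrbase b c).1.ofReal, (hrbase b c).2.ofReal⟩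
  have hutE : ContinuousOn (fun p => ut p * E p) (Set.uIcc p₁ p₂) := by
    rw [Set.uIcc_of_le hp.le]; exact hcont.mul hEcont.continuousOn
  have hgE_int : IntervalIntegrable (fun p => g p * E p) volume p₁ p₂ := by
    have h := (hrC p₁ p₂).mul_continuousOn hutE
    have heq : (fun p => g p * E p)
        = fun p => (((p - p₁) ^ (μ - 1) : ℝ) : ℂ) * (ut p * E p) := by
      funext p; simp only [hgdef]; ring
    rw [heq]; exact h
  have hsub1 : Set.uIcc p₁ a ⊆ Set.uIcc p₁ p₂ := by
    rw [Set.uIcc_of_le ha1.le, Set.uIcc_of_le hp.le]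
    exact Set.Icc_subset_Icc le_rfl ha2.le
  have hsub2 : Set.uIcc a p₂ ⊆ Set.uIcc p₁ p₂ := by
    rw [Set.uIcc_of_le ha2.le, Set.uIcc_of_le hp.le]; exact haIcc
  have hI1int : IntervalIntegrable (fun p => g p * E p) volume p₁ a := hgE_int.mono_set hsub1
  have hI2int : IntervalIntegrable (fun p => g p * E p) volume a p₂ := hgE_int.mono_set hsub2
  have hsplit : (∫ p in p₁..p₂, g p * E p)
      = (∫ p in p₁..a, g p * E p) + ∫ p in a..p₂, g p * E p :=
    (intervalIntegral.integral_add_adjacent_intervals hI1int hI2int).symm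
  -- estimate of the near-singularity piece
  have hnorm_g : ∀ p, p₁ < p → ‖g p * E p‖ = (p - p₁) ^ (μ - 1) * ‖ut p‖ := by
    intro p hpp
    rw [norm_mul, hEnorm, mul_one, hgdef]
    simp only [norm_mul, Complex.norm_real]
    rw [Real.norm_eq_abs, abs_of_nonneg (Real.rpow_nonneg (by linarith) _)]
  have hrval : (∫ p in p₁..a, (p - p₁) ^ (μ - 1)) = ε ^ μ / μ := by
    have h0 : (∫ p in p₁..a, (p - p₁) ^ (μ - 1))
        = ∫ x in (p₁ - p₁)..(a - p₁), x ^ (μ - 1) :=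
      intervalIntegral.integral_comp_sub_right (fun x => x ^ (μ - 1)) p₁
    rw [h0, show p₁ - p₁ = (0:ℝ) by ring, show a - p₁ = ε by rw [hadef]; ring]
    rw [integral_rpow (Or.inl (by linarith))]
    rw [show μ - 1 + 1 = μ by ring, Real.zero_rpow hμ0.ne']
    ring
  have hI1 : ‖∫ p in p₁..a, g p * E p‖ ≤ S/μ * ε ^ μ := by
    have hb : IntervalIntegrable (fun p => S * (p - p₁) ^ (μ - 1)) volume p₁ a :=
      (hrbase p₁ a).const_mul S
    have hle : ∀ᵐ p ∂volume.restrict (Set.uIoc p₁ a), ‖g p * E p‖ ≤ S * (p - p₁) ^ (μ - 1) := by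
      rw [Set.uIoc_of_le ha1.le]
      filter_upwards [MeasureTheory.ae_restrict_mem measurableSet_Ioc] with p hp'
      rw [hnorm_g p hp'.1, mul_comm]
      have hut : ‖ut p‖ ≤ S := hS p ⟨hp'.1.le, hp'.2.trans ha2.le⟩
      exact mul_le_mul_of_nonneg_right hut (Real.rpow_nonneg (by linarith [hp'.1]) _)
    calc ‖∫ p in p₁..a, g p * E p‖ ≤ |∫ p in p₁..a, S * (p - p₁) ^ (μ - 1)| :=
          intervalIntegral.norm_integral_le_abs_of_norm_le hle hb
      _ = S/μ * ε ^ μ := by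
          rw [intervalIntegral.integral_const_mul, hrval, abs_of_nonneg (by positivity)]
          ring
  -- derivative machinery
  set w : ℝ → ℂ := fun p => Complex.I * ((φ p : ℝ) : ℂ) with hwdef
  set h : ℝ → ℂ := fun p => E p * (w p)⁻¹ with hhdef
  set hd : ℝ → ℂ := fun p =>
    E p * (1 + Complex.I * ((φ' p : ℝ) : ℂ) / ((φ p : ℝ) : ℂ) ^ 2) with hhddef
  set z : ℝ → ℂ := fun p => Complex.I * ((φ' p : ℝ) : ℂ) / ((φ p : ℝ) : ℂ) ^ 2 with hzdef
  have hwne : ∀ p ∈ Set.Icc p₁ p₂, w p ≠ 0 := fun p hp' =>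
    mul_ne_zero Complex.I_ne_zero (by exact_mod_cast hφne p hp')
  have hE' : ∀ p, HasDerivAt E (E p * (Complex.I * ((φ p : ℝ) : ℂ))) p := by
    intro p
    have h1 : HasDerivAt (fun q => Complex.I * ((Φ q : ℝ) : ℂ)) (Complex.I * ((φ p : ℝ) : ℂ)) p :=
      ((hΦ p).ofReal_comp).const_mul Complex.I
    exact h1.cexp
  have hh' : ∀ p ∈ Set.Icc p₁ p₂, HasDerivAt h (hd p) p := by
    intro p hp'
    have hw' : HasDerivAt w (Complex.I * ((φ' p : ℝ) : ℂ)) p :=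
      ((hφ p).ofReal_comp).const_mul Complex.I
    have hinv : HasDerivAt (fun q => (w q)⁻¹)
        (-(Complex.I * ((φ' p : ℝ) : ℂ)) / (w p) ^ 2) p := by
      have h2 : HasDerivAt Inv.inv (-((w p) ^ 2)⁻¹) (w p) := hasDerivAt_inv (hwne p hp')
      have h3 := h2.comp p hw'
      refine h3.congr_deriv ?_; symm
      ring
    have hmul := (hE' p).mul hinv
    refine hmul.congr_deriv ?_; symm
    have hφp : ((φ p : ℝ) : ℂ) ≠ 0 := by exact_mod_cast hφne p hp'
    simp only [hhddef, hwdef]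
    field_simp
    ring_nf
    rw [Complex.I_sq]
    ring
  set gd : ℝ → ℂ := fun p => (((μ - 1) * (p - p₁) ^ (μ - 2) : ℝ) : ℂ) * ut p
      + (((p - p₁) ^ (μ - 1) : ℝ) : ℂ) * deriv ut p with hgddef
  have hg' : ∀ p ∈ Set.Ioo p₁ p₂, HasDerivAt g (gd p) p := by
    intro p hp'
    have hne : p - p₁ ≠ 0 := sub_ne_zero.mpr (ne_of_gt hp'.1)
    have h1 : HasDerivAt (fun q : ℝ => (q - p₁) ^ (μ - 1))
        ((μ - 1) * (p - p₁) ^ (μ - 1 - 1)) p := by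
      have := (Real.hasDerivAt_rpow_const (x := p - p₁) (p := μ - 1) (Or.inl hne)).comp p
        ((hasDerivAt_id p).sub_const p₁)
      simpa [Function.comp_def] using this
    have h1' : HasDerivAt (fun q : ℝ => (((q - p₁) ^ (μ - 1) : ℝ) : ℂ))
        ((((μ - 1) * (p - p₁) ^ (μ - 2) : ℝ)) : ℂ) p := by
      have := h1.ofReal_comp
      rw [show μ - 1 - 1 = μ - 2 by ring] at this
      exact this
    have h2 : HasDerivAt ut (deriv ut p) p := (hdiff p hp').hasDerivAt
    have := h1'.mul h2
    simpa [hgdef, hgddef, add_comm, Pi.mul_def] using this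
  -- continuity and integrability on [a, p₂]
  have hut'int : IntervalIntegrable (deriv ut) volume p₁ p₂ := by
    refine ⟨⟨(measurable_deriv ut).aestronglyMeasurable, ?_⟩,
      ⟨(measurable_deriv ut).aestronglyMeasurable, ?_⟩⟩
    · rw [← hasFiniteIntegral_norm_iff]; exact hint.1.2
    · rw [← hasFiniteIntegral_norm_iff]; exact hint.2.2
  have hrpowC : ∀ (c : ℝ), ContinuousOn (fun p : ℝ => (p - p₁) ^ c) (Set.Icc a p₂) := by
    intro c p hp'
    have hne : p - p₁ ≠ 0 := sub_ne_zero.mpr (ne_of_gt (lt_of_lt_of_le ha1 hp'.1))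
    exact ((continuousAt_id.sub continuousAt_const).rpow_const (Or.inl hne)).continuousWithinAt
  have hwinv_cont : ContinuousOn (fun p => (w p)⁻¹) (Set.Icc p₁ p₂) :=
    ((continuous_const.mul (Complex.continuous_ofReal.comp hφcont)).continuousOn).inv₀ hwne
  have hhcont : ContinuousOn h (Set.Icc p₁ p₂) := hEcont.continuousOn.mul hwinv_cont
  have hzcont : ContinuousOn z (Set.Icc p₁ p₂) := by
    apply ContinuousOn.div
    · exact (continuous_const.mul (Complex.continuous_ofReal.comp hφc)).continuousOn
    · exact ((Complex.continuous_ofReal.comp hφcont).pow 2).continuousOn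
    · intro p hp'
      exact pow_ne_zero 2 (by exact_mod_cast hφne p hp')
  have hhdcont : ContinuousOn hd (Set.Icc p₁ p₂) :=
    hEcont.continuousOn.mul (continuousOn_const.add hzcont)
  have hgcont : ContinuousOn g (Set.Icc a p₂) :=
    (Complex.continuous_ofReal.comp_continuousOn (hrpowC (μ - 1))).mul (hcont.mono haIcc)
  have hgd_int : IntervalIntegrable gd volume a p₂ := by
    apply IntervalIntegrable.add
    · apply ContinuousOn.intervalIntegrable
      rw [Set.uIcc_of_le ha2.le]
      exact (Complex.continuous_ofReal.comp_continuousOn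
        (continuousOn_const.mul (hrpowC (μ - 2)))).mul (hcont.mono haIcc)
    · apply IntervalIntegrable.continuousOn_mul (hut'int.mono_set hsub2)
      rw [Set.uIcc_of_le ha2.le]
      exact Complex.continuous_ofReal.comp_continuousOn (hrpowC (μ - 1))
  have hparts : (∫ p in a..p₂, gd p * h p + g p * hd p) = g p₂ * h p₂ - g a * h a := by
    apply intervalIntegral.integral_deriv_mul_eq_sub_of_hasDerivAt
    · rw [Set.uIcc_of_le ha2.le]; exact hgcont
    · rw [Set.uIcc_of_le ha2.le]; exact hhcont.mono haIcc
    · intro p hp'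
      rw [min_eq_left ha2.le, max_eq_right ha2.le] at hp'
      exact hg' p ⟨lt_trans ha1 hp'.1, hp'.2⟩
    · intro p hp'
      rw [min_eq_left ha2.le, max_eq_right ha2.le] at hp'
      exact hh' p (haIcc ⟨hp'.1.le, hp'.2.le⟩)
    · exact hgd_int
    · apply ContinuousOn.intervalIntegrable
      rw [Set.uIcc_of_le ha2.le]
      exact hhdcont.mono haIcc
  have hgdh_int : IntervalIntegrable (fun p => gd p * h p) volume a p₂ := by
    apply hgd_int.mul_continuousOn
    rw [Set.uIcc_of_le ha2.le]
    exact hhcont.mono haIcc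
  have hghd_int : IntervalIntegrable (fun p => g p * hd p) volume a p₂ := by
    apply ContinuousOn.intervalIntegrable
    rw [Set.uIcc_of_le ha2.le]
    exact hgcont.mul (hhdcont.mono haIcc)
  have hgEz_int : IntervalIntegrable (fun p => g p * E p * z p) volume a p₂ := by
    apply ContinuousOn.intervalIntegrable
    rw [Set.uIcc_of_le ha2.le]
    exact (hgcont.mul hEcont.continuousOn).mul (hzcont.mono haIcc)
  have hadd : (∫ p in a..p₂, gd p * h p + g p * hd p)
      = (∫ p in a..p₂, gd p * h p) + ∫ p in a..p₂, g p * hd p :=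
    intervalIntegral.integral_add hgdh_int hghd_int
  have hdecomp : (∫ p in a..p₂, g p * hd p)
      = (∫ p in a..p₂, g p * E p) + ∫ p in a..p₂, g p * E p * z p := by
    rw [← intervalIntegral.integral_add hI2int hgEz_int]
    apply intervalIntegral.integral_congr
    intro p _
    simp only [hhddef, hzdef]
    ring
  have hI2eq : (∫ p in a..p₂, g p * E p)
      = g p₂ * h p₂ - g a * h a - (∫ p in a..p₂, gd p * h p)
        - ∫ p in a..p₂, g p * E p * z p := by
    rw [← hparts, hadd, hdecomp]; ring
  -- norm estimates
  have hinvL : L⁻¹ = ε := by rw [hεdef, one_div]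
  have hhnorm : ∀ p ∈ Set.Icc p₁ p₂, ‖h p‖ ≤ ε := by
    intro p hp'
    simp only [hhdef]
    rw [norm_mul, hEnorm, one_mul, norm_inv]
    have hwn : ‖w p‖ = |φ p| := by
      simp only [hwdef]
      rw [norm_mul, Complex.norm_I, one_mul, Complex.norm_real, Real.norm_eq_abs]
    rw [hwn, ← hinvL]
    exact inv_anti₀ hL (hLφ p hp')
  have hrle : ∀ p ∈ Set.Icc a p₂, (p - p₁) ^ (μ - 1) ≤ ε ^ (μ - 1) := by
    intro p hp'
    have : p₁ + ε ≤ p := hp'.1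
    exact Real.rpow_le_rpow_of_nonpos hε0 (by linarith) (by linarith)
  have hgnorm : ∀ p ∈ Set.Icc a p₂, ‖g p‖ ≤ ε ^ (μ - 1) * S := by
    intro p hp'
    have h0 : (0:ℝ) < p - p₁ := by
      have : p₁ + ε ≤ p := hp'.1
      linarith
    simp only [hgdef]
    rw [norm_mul, Complex.norm_real, Real.norm_eq_abs, abs_of_nonneg (Real.rpow_nonneg h0.le _)]
    exact mul_le_mul (hrle p hp') (hS p (haIcc hp')) (norm_nonneg _) (by positivity)
  have hbd : ∀ p ∈ Set.Icc a p₂, ‖g p * h p‖ ≤ ε ^ (μ - 1) * S * ε := by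
    intro p hp'
    rw [norm_mul]
    exact mul_le_mul (hgnorm p hp') (hhnorm p (haIcc hp')) (norm_nonneg _)
      (mul_nonneg (Real.rpow_nonneg hε0.le _) hS0)
  have hFTC : (∫ p in a..p₂, (1 - μ) * (p - p₁) ^ (μ - 2))
      = ε ^ (μ - 1) - (p₂ - p₁) ^ (μ - 1) := by
    have hder : ∀ p ∈ Set.uIcc a p₂,
        HasDerivAt (fun q : ℝ => -((q - p₁) ^ (μ - 1))) ((1 - μ) * (p - p₁) ^ (μ - 2)) p := by
      intro p hp'
      rw [Set.uIcc_of_le ha2.le] at hp'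
      have hne : p - p₁ ≠ 0 := sub_ne_zero.mpr (ne_of_gt (lt_of_lt_of_le ha1 hp'.1))
      have h1 : HasDerivAt (fun q : ℝ => (q - p₁) ^ (μ - 1))
          ((μ - 1) * (p - p₁) ^ (μ - 1 - 1)) p := by
        have := (Real.hasDerivAt_rpow_const (x := p - p₁) (p := μ - 1) (Or.inl hne)).comp p
          ((hasDerivAt_id p).sub_const p₁)
        simpa [Function.comp_def] using this
      have h2 := h1.neg
      rw [show μ - 1 - 1 = μ - 2 by ring] at h2
      refine h2.congr_deriv ?_; symm
      ring
    have hcont' : IntervalIntegrable (fun p : ℝ => (1 - μ) * (p - p₁) ^ (μ - 2)) volume a p₂ := by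
      apply ContinuousOn.intervalIntegrable
      rw [Set.uIcc_of_le ha2.le]
      exact continuousOn_const.mul (hrpowC (μ - 2))
    rw [intervalIntegral.integral_eq_sub_of_hasDerivAt hder hcont']
    rw [show a - p₁ = ε by rw [hadef]; ring]
    ring
  have hVsub : (∫ p in a..p₂, ‖deriv ut p‖) ≤ V := by
    have h1 := intervalIntegral.integral_add_adjacent_intervals
      (hint.mono_set hsub1) (hint.mono_set hsub2)
    have h0 : 0 ≤ ∫ p in p₁..a, ‖deriv ut p‖ :=
      intervalIntegral.integral_nonneg ha1.le (fun u _ => norm_nonneg _)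
    linarith [hV, h1]
  have hb1int : IntervalIntegrable (fun p : ℝ => (1 - μ) * (p - p₁) ^ (μ - 2) * S) volume a p₂ := by
    apply ContinuousOn.intervalIntegrable
    rw [Set.uIcc_of_le ha2.le]
    exact (continuousOn_const.mul (hrpowC (μ - 2))).mul continuousOn_const
  have hb2int : IntervalIntegrable (fun p : ℝ => ε ^ (μ - 1) * ‖deriv ut p‖) volume a p₂ :=
    (hint.mono_set hsub2).const_mul _
  have hT3 : ‖∫ p in a..p₂, gd p * h p‖ ≤ (S * ε ^ (μ - 1) + ε ^ (μ - 1) * V) * ε := by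
    set bound : ℝ → ℝ :=
      fun p => ((1 - μ) * (p - p₁) ^ (μ - 2) * S + ε ^ (μ - 1) * ‖deriv ut p‖) * ε with hbdef
    have hbint : IntervalIntegrable bound volume a p₂ := (hb1int.add hb2int).mul_const _
    have hbnn : ∀ p ∈ Set.Icc a p₂, 0 ≤ bound p := by
      intro p hp'
      have h0 : (0:ℝ) < p - p₁ := by
        have : p₁ + ε ≤ p := hp'.1
        linarith
      have := Real.rpow_nonneg h0.le (μ - 2)
      have h2 : (0:ℝ) ≤ ε ^ (μ - 1) := Real.rpow_nonneg hε0.le _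
      simp only [hbdef]
      apply mul_nonneg _ hε0.le
      apply add_nonneg
      · exact mul_nonneg (mul_nonneg (by linarith) this) hS0
      · exact mul_nonneg h2 (norm_nonneg _)
    have hle3 : ∀ᵐ p ∂volume.restrict (Set.uIoc a p₂), ‖gd p * h p‖ ≤ bound p := by
      rw [Set.uIoc_of_le ha2.le]
      filter_upwards [MeasureTheory.ae_restrict_mem measurableSet_Ioc] with p hp'
      have hpmem : p ∈ Set.Icc a p₂ := ⟨hp'.1.le, hp'.2⟩
      have h0 : (0:ℝ) < p - p₁ := by
        have : p₁ + ε ≤ p := hpmem.1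
        linarith
      have hr2 : (0:ℝ) ≤ (p - p₁) ^ (μ - 2) := Real.rpow_nonneg h0.le _
      rw [norm_mul]
      simp only [hbdef]
      apply mul_le_mul _ (hhnorm p (haIcc hpmem)) (norm_nonneg _) _
      · simp only [hgddef]
        apply le_trans (norm_add_le _ _)
        apply add_le_add
        · rw [norm_mul, Complex.norm_real, Real.norm_eq_abs, abs_mul,
            abs_of_nonneg hr2, abs_of_nonpos (by linarith : μ - 1 ≤ 0),
            show -(μ - 1) = 1 - μ by ring]
          exact mul_le_mul_of_nonneg_left (hS p (haIcc hpmem)) (mul_nonneg (by linarith) hr2)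
        · rw [norm_mul, Complex.norm_real, Real.norm_eq_abs,
            abs_of_nonneg (Real.rpow_nonneg h0.le _)]
          exact mul_le_mul_of_nonneg_right (hrle p hpmem) (norm_nonneg _)
      · apply add_nonneg
        · exact mul_nonneg (mul_nonneg (by linarith) hr2) hS0
        · exact mul_nonneg (Real.rpow_nonneg hε0.le _) (norm_nonneg _)
    have hval : (∫ p in a..p₂, bound p) ≤ (S * ε ^ (μ - 1) + ε ^ (μ - 1) * V) * ε := by
      simp only [hbdef]
      rw [intervalIntegral.integral_mul_const]
      apply mul_le_mul_of_nonneg_right _ hε0.le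
      rw [intervalIntegral.integral_add hb1int hb2int,
        intervalIntegral.integral_mul_const, intervalIntegral.integral_const_mul,
        intervalIntegral.integral_const_mul]
      have hFTC2 : ((1 - μ) * ∫ x in a..p₂, (x - p₁) ^ (μ - 2))
          = ε ^ (μ - 1) - (p₂ - p₁) ^ (μ - 1) := by
        rw [← hFTC, intervalIntegral.integral_const_mul]
      rw [hFTC2]
      have hnn2 : (0:ℝ) ≤ (p₂ - p₁) ^ (μ - 1) := Real.rpow_nonneg (by linarith) _
      have := mul_le_mul_of_nonneg_left hVsub (Real.rpow_nonneg hε0.le (μ - 1))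
      nlinarith [Real.rpow_nonneg hε0.le (μ - 1)]
    calc ‖∫ p in a..p₂, gd p * h p‖ ≤ |∫ p in a..p₂, bound p| :=
          intervalIntegral.norm_integral_le_abs_of_norm_le hle3 hbint
      _ = ∫ p in a..p₂, bound p :=
          abs_of_nonneg (intervalIntegral.integral_nonneg ha2.le hbnn)
      _ ≤ _ := hval
  have hznorm : ∀ p ∈ Set.Icc p₁ p₂, ‖z p‖ ≤ F₂ * ε ^ 2 := by
    intro p hp'
    simp only [hzdef]
    rw [norm_div, norm_mul, Complex.norm_I, one_mul, Complex.norm_real, Real.norm_eq_abs,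
      norm_pow, Complex.norm_real, Real.norm_eq_abs]
    have h1 : L ^ 2 ≤ |φ p| ^ 2 := pow_le_pow_left₀ hL.le (hLφ p hp') 2
    have h2 : (0:ℝ) < |φ p| ^ 2 := lt_of_lt_of_le (by positivity) h1
    rw [div_le_iff₀ h2]
    calc |φ' p| ≤ F₂ := hF₂ p hp'
      _ = F₂ * ε ^ 2 * L ^ 2 := by rw [hεdef]; field_simp
      _ ≤ F₂ * ε ^ 2 * |φ p| ^ 2 :=
          mul_le_mul_of_nonneg_left h1 (by positivity)
  have hT4 : ‖∫ p in a..p₂, g p * E p * z p‖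
      ≤ (p₂ - p₁) * (ε ^ (μ - 1) * S * (F₂ * ε ^ 2)) := by
    have hcnn : (0:ℝ) ≤ ε ^ (μ - 1) * S * (F₂ * ε ^ 2) :=
      mul_nonneg (mul_nonneg (Real.rpow_nonneg hε0.le _) hS0) (by positivity)
    have hle4 : ∀ᵐ p ∂volume.restrict (Set.uIoc a p₂),
        ‖g p * E p * z p‖ ≤ ε ^ (μ - 1) * S * (F₂ * ε ^ 2) := by
      rw [Set.uIoc_of_le ha2.le]
      filter_upwards [MeasureTheory.ae_restrict_mem measurableSet_Ioc] with p hp'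
      have hpmem : p ∈ Set.Icc a p₂ := ⟨hp'.1.le, hp'.2⟩
      rw [norm_mul, norm_mul, hEnorm, mul_one]
      exact mul_le_mul (hgnorm p hpmem) (hznorm p (haIcc hpmem)) (norm_nonneg _)
        (mul_nonneg (Real.rpow_nonneg hε0.le _) hS0)
    calc ‖∫ p in a..p₂, g p * E p * z p‖
        ≤ |∫ p in a..p₂, ε ^ (μ - 1) * S * (F₂ * ε ^ 2)| :=
          intervalIntegral.norm_integral_le_abs_of_norm_le hle4 intervalIntegrable_const
      _ = |(p₂ - a) * (ε ^ (μ - 1) * S * (F₂ * ε ^ 2))| := by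
          rw [intervalIntegral.integral_const, smul_eq_mul]
      _ = (p₂ - a) * (ε ^ (μ - 1) * S * (F₂ * ε ^ 2)) := by
          rw [abs_of_nonneg (mul_nonneg (by linarith) hcnn)]
      _ ≤ (p₂ - p₁) * (ε ^ (μ - 1) * S * (F₂ * ε ^ 2)) :=
          mul_le_mul_of_nonneg_right (by linarith) hcnn
  have hεμ : ε ^ (μ - 1) * ε = ε ^ μ := by
    have h1 := Real.rpow_add hε0 (μ - 1) 1
    rw [Real.rpow_one] at h1
    rw [← h1]
    norm_num
  have hI2 : ‖∫ p in a..p₂, g p * E p‖ ≤ (3 * S + V + (p₂ - p₁) * S * F₂ / L) * ε ^ μ := by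
    rw [hI2eq]
    have step : ‖g p₂ * h p₂ - g a * h a - (∫ p in a..p₂, gd p * h p)
        - ∫ p in a..p₂, g p * E p * z p‖
        ≤ ‖g p₂ * h p₂‖ + ‖g a * h a‖ + ‖∫ p in a..p₂, gd p * h p‖
          + ‖∫ p in a..p₂, g p * E p * z p‖ := by
      calc _ ≤ ‖g p₂ * h p₂ - g a * h a - (∫ p in a..p₂, gd p * h p)‖
            + ‖∫ p in a..p₂, g p * E p * z p‖ := norm_sub_le _ _
        _ ≤ (‖g p₂ * h p₂ - g a * h a‖ + ‖∫ p in a..p₂, gd p * h p‖)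
            + ‖∫ p in a..p₂, g p * E p * z p‖ := by
            gcongr
            exact norm_sub_le _ _
        _ ≤ _ := by
            gcongr
            exact norm_sub_le _ _
    apply le_trans step
    have hA := hbd p₂ ⟨ha2.le, le_rfl⟩
    have hB := hbd a ⟨le_rfl, ha2.le⟩
    have htot := add_le_add (add_le_add (add_le_add hA hB) hT3) hT4
    apply le_trans htot
    apply le_of_eq
    rw [div_eq_mul_inv, hinvL]
    linear_combination (3 * S + V + (p₂ - p₁) * S * F₂ * ε) * hεμ
  have hgoal : (∫ p in p₁..p₂, (((p - p₁) ^ (μ - 1) : ℝ) : ℂ) * ut p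
      * Complex.exp (Complex.I * ((Φ p : ℝ) : ℂ))) = ∫ p in p₁..p₂, g p * E p := rfl
  rw [hgoal, hsplit]
  calc ‖(∫ p in p₁..a, g p * E p) + ∫ p in a..p₂, g p * E p‖
      ≤ ‖∫ p in p₁..a, g p * E p‖ + ‖∫ p in a..p₂, g p * E p‖ := norm_add_le _ _
    _ ≤ S/μ * ε ^ μ + (3 * S + V + (p₂ - p₁) * S * F₂ / L) * ε ^ μ := add_le_add hI1 hI2
    _ = (S/μ + (3*S + V + (p₂-p₁)*S*F₂/L)) * (1/L) ^ μ := by rw [← hεdef]; ring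

set_option maxHeartbeats 1000000 in
theorem dispersive_outside_cone_estimate
    (f : ℝ → ℝ) (hf : ContDiff ℝ (⊤ : ℕ∞) f)
    (hconv : ∀ p : ℝ, 0 < deriv (deriv f) p)
    (p₁ p₂ : ℝ) (hp : p₁ < p₂) (μ : ℝ) (hμ : μ ∈ Set.Ioc (0:ℝ) 1)
    (Fu₀ : ℝ → ℂ) (ut : ℝ → ℂ)
    (hcont : ContinuousOn ut (Set.Icc p₁ p₂))
    (hdiff : ∀ p ∈ Set.Ioo p₁ p₂, DifferentiableAt ℝ ut p)
    (hint : IntervalIntegrable (fun p => ‖deriv ut p‖) volume p₁ p₂)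
    (hFu₀ : ∀ p ∈ Set.Ioc p₁ p₂, Fu₀ p = (((p - p₁) ^ (μ - 1) : ℝ) : ℂ) * ut p)
    (u : ℝ → ℝ → ℂ)
    (hu : ∀ t x : ℝ, u t x =
      (1 / (2 * Real.pi)) *
        ∫ p in p₁..p₂, Fu₀ p * Complex.exp (Complex.I * (-(t * f p) + x * p)))
    (pt₁ pt₂ : ℝ) (h₁ : pt₁ < p₁) (h₂ : p₂ < pt₂) :
    ∃ c : ℝ, 0 < c ∧ ∀ t x : ℝ, 0 < t →
      (deriv f pt₂ < x / t ∨ x / t < deriv f pt₁) →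
        ‖u t x‖ ≤ c * t ^ (-μ) := by
  obtain ⟨hμ0, hμ1⟩ := hμ
  -- smoothness facts
  have hf0 : ContDiff ℝ (⊤ : ℕ∞) f := hf.of_le (by simp)
  have hdf : Differentiable ℝ f := hf0.differentiable (by simp)
  have hf1 : ContDiff ℝ (⊤ : ℕ∞) (deriv f) := (contDiff_infty_iff_deriv.mp hf0).2
  have hdf2 : Differentiable ℝ (deriv f) := hf1.differentiable (by simp)
  have hf''cont : Continuous (deriv (deriv f)) := ((contDiff_infty_iff_deriv.mp hf1).2).continuous
  have hmono : StrictMono (deriv f) := strictMono_of_deriv_pos hconv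
  -- sup of ‖ut‖
  obtain ⟨qS, hqS, hqSmax⟩ := isCompact_Icc.exists_isMaxOn (Set.nonempty_Icc.mpr hp.le)
    (continuous_norm.comp_continuousOn hcont)
  set S : ℝ := ‖ut qS‖ with hSdef
  have hS : ∀ p ∈ Set.Icc p₁ p₂, ‖ut p‖ ≤ S := fun p hp' => hqSmax hp'
  have hS0 : 0 ≤ S := norm_nonneg _
  -- sup of |f''|
  obtain ⟨qF, hqF, hqFmax⟩ := isCompact_Icc.exists_isMaxOn (Set.nonempty_Icc.mpr hp.le)
    (hf''cont.abs.continuousOn (s := Set.Icc p₁ p₂))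
  set F₂ : ℝ := |deriv (deriv f) qF| with hF₂def
  have hF₂ : ∀ p ∈ Set.Icc p₁ p₂, |deriv (deriv f) p| ≤ F₂ := fun p hp' => hqFmax hp'
  have hF₂0 : 0 ≤ F₂ := abs_nonneg _
  set V : ℝ := ∫ p in p₁..p₂, ‖deriv ut p‖ with hVdef
  have hV0 : 0 ≤ V := intervalIntegral.integral_nonneg hp.le (fun u _ => norm_nonneg _)
  set δ : ℝ := min (deriv f pt₂ - deriv f p₂) (deriv f p₁ - deriv f pt₁) with hδdef
  have hδ : 0 < δ := lt_min (sub_pos.mpr (hmono h₂)) (sub_pos.mpr (hmono h₁))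
  set t₀ : ℝ := max 1 (2 / (δ * (p₂ - p₁))) with ht₀def
  have ht₀1 : (1:ℝ) ≤ t₀ := le_max_left _ _
  have ht₀pos : (0:ℝ) < t₀ := lt_of_lt_of_le one_pos ht₀1
  set M : ℝ := (1 / (2 * Real.pi)) * (S * (p₂ - p₁) ^ μ / μ) with hMdef
  have hM0 : 0 ≤ M := by
    apply mul_nonneg
    · positivity
    · have h5 : (0:ℝ) ≤ (p₂ - p₁) ^ μ := Real.rpow_nonneg (by linarith) _
      exact div_nonneg (mul_nonneg hS0 h5) hμ0.le
  set K₀ : ℝ := 3 * S + V + (p₂ - p₁) * S * F₂ / δ with hK₀def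
  set Cc : ℝ := (1 / (2 * Real.pi)) * ((S / μ + K₀) * (1 / δ) ^ μ) with hCcdef
  have hCc0 : 0 ≤ Cc := by
    apply mul_nonneg (by positivity)
    apply mul_nonneg _ (Real.rpow_nonneg (one_div_nonneg.mpr hδ.le) _)
    have hd : 0 ≤ (p₂ - p₁) * S * F₂ / δ :=
      div_nonneg (mul_nonneg (mul_nonneg (by linarith) hS0) hF₂0) hδ.le
    have hsm : 0 ≤ S / μ := div_nonneg hS0 hμ0.le
    simp only [hK₀def]
    linarith
  have hmax0 : 0 ≤ max (M * t₀ ^ μ) Cc :=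
    le_trans (mul_nonneg hM0 (Real.rpow_nonneg ht₀pos.le _)) (le_max_left _ _)
  refine ⟨max (M * t₀ ^ μ) Cc + 1, by linarith, ?_⟩
  intro t x ht hcone
  have htμ : (0:ℝ) < t ^ (-μ) := Real.rpow_pos_of_pos ht _
  -- norm of the prefactor
  have hpre : ‖(1 / (2 * (Real.pi : ℂ)))‖ = 1 / (2 * Real.pi) := by
    have he : (1 / (2 * (Real.pi : ℂ))) = (((1 / (2 * Real.pi) : ℝ)) : ℂ) := by push_cast; ring
    rw [he, Complex.norm_real, Real.norm_eq_abs, abs_of_nonneg (by positivity)]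
  rcases le_total t t₀ with hle | hge
  · -- small time: trivial bound
    have htriv : ‖u t x‖ ≤ M := by
      rw [hu]
      rw [norm_mul, hpre]
      simp only [hMdef]
      apply mul_le_mul_of_nonneg_left _ (by positivity)
      -- ‖∫ Fu₀ E‖ ≤ S * (p₂-p₁)^μ / μ
      have hrbase : IntervalIntegrable (fun p : ℝ => S * (p - p₁) ^ (μ - 1)) volume p₁ p₂ := by
        apply IntervalIntegrable.const_mul
        have h0 : IntervalIntegrable (fun x : ℝ => x ^ (μ - 1)) volume (p₁ - p₁) (p₂ - p₁) :=
          intervalIntegral.intervalIntegrable_rpow' (by linarith)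
        simpa using h0.comp_sub_right p₁
      have hle2 : ∀ᵐ p ∂volume.restrict (Set.uIoc p₁ p₂),
          ‖Fu₀ p * Complex.exp (Complex.I * (-(t * f p) + x * p))‖ ≤ S * (p - p₁) ^ (μ - 1) := by
        rw [Set.uIoc_of_le hp.le]
        filter_upwards [MeasureTheory.ae_restrict_mem measurableSet_Ioc] with p hp'
        rw [hFu₀ p hp', norm_mul, norm_mul]
        have hexp : ‖Complex.exp (Complex.I * (-(↑t * ↑(f p)) + ↑x * ↑p))‖ = 1 := by
          have : (-(↑t * ↑(f p)) + ↑x * ↑p : ℂ) = ((-(t * f p) + x * p : ℝ) : ℂ) := by push_cast; ring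
          rw [this]
          simp only [Complex.norm_exp]
          norm_num [Complex.mul_re]
        rw [hexp, mul_one, Complex.norm_real, Real.norm_eq_abs,
          abs_of_nonneg (Real.rpow_nonneg (by linarith [hp'.1]) _), mul_comm]
        exact mul_le_mul_of_nonneg_right (hS p ⟨hp'.1.le, hp'.2⟩)
          (Real.rpow_nonneg (by linarith [hp'.1]) _)
      have hrval : (∫ p in p₁..p₂, S * (p - p₁) ^ (μ - 1)) = S * (p₂ - p₁) ^ μ / μ := by
        rw [intervalIntegral.integral_const_mul]
        have h0 : (∫ p in p₁..p₂, (p - p₁) ^ (μ - 1))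
            = ∫ x in (p₁ - p₁)..(p₂ - p₁), x ^ (μ - 1) :=
          intervalIntegral.integral_comp_sub_right (fun x => x ^ (μ - 1)) p₁
        rw [h0, show p₁ - p₁ = (0:ℝ) by ring]
        rw [integral_rpow (Or.inl (by linarith))]
        rw [show μ - 1 + 1 = μ by ring, Real.zero_rpow hμ0.ne']
        ring
      calc ‖∫ p in p₁..p₂, Fu₀ p * Complex.exp (Complex.I * (-(↑t * ↑(f p)) + ↑x * ↑p))‖
          ≤ |∫ p in p₁..p₂, S * (p - p₁) ^ (μ - 1)| :=
            intervalIntegral.norm_integral_le_abs_of_norm_le hle2 hrbase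
        _ = S * (p₂ - p₁) ^ μ / μ := by
            rw [hrval, abs_of_nonneg]
            have : (0:ℝ) ≤ (p₂ - p₁) ^ μ := Real.rpow_nonneg (by linarith) _
            positivity
    have h2 : t₀ ^ (-μ) ≤ t ^ (-μ) := Real.rpow_le_rpow_of_nonpos ht hle (by linarith)
    have ht₀μ : t₀ ^ μ * t₀ ^ (-μ) = 1 := by
      rw [← Real.rpow_add ht₀pos]; norm_num
    calc ‖u t x‖ ≤ M := htriv
      _ = M * t₀ ^ μ * t₀ ^ (-μ) := by rw [mul_assoc, ht₀μ, mul_one]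
      _ ≤ M * t₀ ^ μ * t ^ (-μ) := by
          apply mul_le_mul_of_nonneg_left h2
          exact mul_nonneg hM0 (Real.rpow_nonneg ht₀pos.le _)
      _ ≤ (max (M * t₀ ^ μ) Cc + 1) * t ^ (-μ) := by
          apply mul_le_mul_of_nonneg_right _ htμ.le
          calc M * t₀ ^ μ ≤ max (M * t₀ ^ μ) Cc := le_max_left _ _
            _ ≤ max (M * t₀ ^ μ) Cc + 1 := by linarith
  · -- large time: core estimate
    set L : ℝ := t * δ with hLdef
    have hL : 0 < L := mul_pos ht hδ
    have hLφ : ∀ p ∈ Set.Icc p₁ p₂, L ≤ |x - t * deriv f p| := by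
      intro p hp'
      rcases hcone with hc | hc
      · have e1 : t * deriv f p ≤ t * deriv f p₂ :=
          mul_le_mul_of_nonneg_left (hmono.monotone hp'.2) ht.le
        have e2 := mul_le_mul_of_nonneg_left (min_le_left
          (deriv f pt₂ - deriv f p₂) (deriv f p₁ - deriv f pt₁)) ht.le
        rw [mul_sub] at e2
        have e3 : deriv f pt₂ * t < x := (lt_div_iff₀ ht).mp hc
        have := le_abs_self (x - t * deriv f p)
        simp only [hLdef, hδdef]
        nlinarith
      · have e1 : t * deriv f p₁ ≤ t * deriv f p :=
          mul_le_mul_of_nonneg_left (hmono.monotone hp'.1) ht.le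
        have e2 := mul_le_mul_of_nonneg_left (min_le_right
          (deriv f pt₂ - deriv f p₂) (deriv f p₁ - deriv f pt₁)) ht.le
        rw [mul_sub] at e2
        have e3 : x < deriv f pt₁ * t := (div_lt_iff₀ ht).mp hc
        have := neg_le_abs (x - t * deriv f p)
        simp only [hLdef, hδdef]
        nlinarith
    have hε : 1 / L ≤ (p₂ - p₁) / 2 := by
      have h2 : 2 / (δ * (p₂ - p₁)) ≤ t := le_trans (le_max_right _ _) hge
      have h3 : 2 ≤ t * (δ * (p₂ - p₁)) := (div_le_iff₀ (mul_pos hδ (by linarith))).mp h2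
      rw [div_le_div_iff₀ hL (by norm_num)]
      simp only [hLdef]
      nlinarith
    -- derivative data
    have hΦ : ∀ p : ℝ, HasDerivAt (fun q => -(t * f q) + x * q) (x - t * deriv f p) p := by
      intro p
      have h1 := (((hdf p).hasDerivAt.const_mul t).neg).add ((hasDerivAt_id p).const_mul x)
      refine h1.congr_deriv ?_; symm
      ring
    have hφ : ∀ p : ℝ, HasDerivAt (fun q => x - t * deriv f q) (-(t * deriv (deriv f) p)) p :=
      fun p => ((hdf2 p).hasDerivAt.const_mul t).const_sub x
    have hφc : Continuous (fun p => -(t * deriv (deriv f) p)) :=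
      (continuous_const.mul hf''cont).neg
    have hF₂' : ∀ p ∈ Set.Icc p₁ p₂, |-(t * deriv (deriv f) p)| ≤ t * F₂ := by
      intro p hp'
      rw [abs_neg, abs_mul, abs_of_pos ht]
      exact mul_le_mul_of_nonneg_left (hF₂ p hp') ht.le
    have hcore := core_estimate p₁ p₂ hp μ hμ0 hμ1 ut hcont hdiff hint S V (t * F₂)
      hS (le_of_eq hVdef.symm) hV0
      (fun q => -(t * f q) + x * q) (fun q => x - t * deriv f q)
      (fun q => -(t * deriv (deriv f) q)) hΦ hφ hφc hF₂' L hL hLφ hε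
    -- rewrite the integral
    have hcongr : (∫ p in p₁..p₂, Fu₀ p * Complex.exp (Complex.I * (-(↑t * ↑(f p)) + ↑x * ↑p)))
        = ∫ p in p₁..p₂, (((p - p₁) ^ (μ - 1) : ℝ) : ℂ) * ut p
            * Complex.exp (Complex.I * (((-(t * f p) + x * p : ℝ)) : ℂ)) := by
      apply intervalIntegral.integral_congr_ae
      filter_upwards with p hpmem
      rw [Set.uIoc_of_le hp.le] at hpmem
      rw [hFu₀ p hpmem]
      congr 2
      push_cast
      ring
    have hval : ‖u t x‖ ≤ (1 / (2 * Real.pi))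
        * ((S / μ + (3 * S + V + (p₂ - p₁) * S * (t * F₂) / L)) * (1 / L) ^ μ) := by
      rw [hu, norm_mul, hpre, hcongr]
      exact mul_le_mul_of_nonneg_left hcore (by positivity)
    have hKeq : (p₂ - p₁) * S * (t * F₂) / L = (p₂ - p₁) * S * F₂ / δ := by
      simp only [hLdef]
      field_simp
    have hLμ : (1 / L) ^ μ = (1 / δ) ^ μ * t ^ (-μ) := by
      have h1 : (1 : ℝ) / L = (1 / δ) * t⁻¹ := by
        simp only [hLdef]; field_simp
      rw [h1, Real.mul_rpow (one_div_nonneg.mpr hδ.le) (inv_nonneg.mpr ht.le),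
        Real.inv_rpow ht.le, Real.rpow_neg ht.le]
    rw [hKeq, hLμ] at hval
    calc ‖u t x‖ ≤ (1 / (2 * Real.pi)) * ((S / μ + (3 * S + V + (p₂ - p₁) * S * F₂ / δ))
          * ((1 / δ) ^ μ * t ^ (-μ))) := hval
      _ = Cc * t ^ (-μ) := by simp only [hCcdef, hK₀def]; ring
      _ ≤ (max (M * t₀ ^ μ) Cc + 1) * t ^ (-μ) := by
          apply mul_le_mul_of_nonneg_right _ htμ.le
          calc Cc ≤ max (M * t₀ ^ μ) Cc := le_max_right _ _
            _ ≤ max (M * t₀ ^ μ) Cc + 1 := by linarith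
end
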